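/- Fix a vertex v, and for every ancestor u of v (a vertex u ≠ v from which v is reachable) consider the lexicographically-first shortest path P(u, v). For every vertex x ≠ v that lies on some P(u, v), the vertex immediately following x is the same in every path P(u, v) that contains x. Hence the union of the paths P(u, v) over all ancestors u of v is a tree T_v in which every vertex other than v has a unique outgoing edge, and all paths lead to the sink v. -/

import Mathlib

/-- `L` is a directed walk from `u` to `v`: a nonempty list of vertices starting at `u`,
ending at `v`, with consecutive vertices joined by edges. Its number of edges is `L.length - 1`. -/
def IsWalk {V : Type} (E : V → V → Prop) (u v : V) (L : List V) : Prop :=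
  L ≠ [] ∧ L.head? = some u ∧ L.getLast? = some v ∧ L.Chain' E

/-- A directed path: a walk with pairwise distinct vertices. -/
def IsPath {V : Type} (E : V → V → Prop) (u v : V) (L : List V) : Prop :=
  IsWalk E u v L ∧ L.Nodup

/-- The weight of a walk: the sum of the weights of its consecutive edges
(the trivial walk has weight 0). -/
def walkWeight {V : Type} (w : V → V → ℝ) (L : List V) : ℝ :=
  ((L.zip L.tail).map fun e => w e.1 e.2).sum

/-- `v` is reachable from `u`. -/
def Reaches {V : Type} (E : V → V → Prop) (u v : V) : Prop :=
  ∃ L, IsWalk E u v L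

/-- BFS level: the minimum number of edges of a directed walk from `s` to `v`. -/
noncomputable def level {V : Type} (E : V → V → Prop) (s v : V) : ℕ :=
  sInf {k | ∃ L, IsWalk E s v L ∧ L.length = k + 1}

/-- `L` is the lexicographically-first shortest path from `u` to `v`: a minimum-weight
directed path from `u` to `v` whose reversed sequence of vertex indices is
lexicographically smallest among all minimum-weight directed paths from `u` to `v`. -/
def IsLexFirstSP {V : Type} (E : V → V → Prop) (w : V → V → ℝ) (idx : V → ℕ)
    (u v : V) (L : List V) : Prop :=
  IsPath E u v L ∧
  (∀ M, IsPath E u v M → walkWeight w L ≤ walkWeight w M) ∧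
  (∀ M, IsPath E u v M → walkWeight w M = walkWeight w L →
    ¬ List.Lex (· < ·) (M.reverse.map idx) (L.reverse.map idx))

/-- `pdist E w u v` is the minimum weight `d(u, v)` of a directed path from `u` to `v`
(for `v` reachable from `u`); in particular `pdist E w u u = 0`, the weight of the
trivial path. -/
noncomputable def pdist {V : Type} (E : V → V → Prop) (w : V → V → ℝ) (u v : V) : ℝ :=
  sInf {r : ℝ | ∃ L, IsPath E u v L ∧ walkWeight w L = r}

/-! Exchange argument: if lexicographically-first shortest paths `A₁ ++ x :: T₁` and
`A₂ ++ x :: T₂` both pass through `x`, swapping their tails yields paths again, since the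
topological numbering puts the vertices before `x` below `idx x` and those after it above.
Weight-minimality of both paths then forces equal tail weights, and lex-minimality says each
reversed tail, followed by the common `A.reverse`, is no smaller than the other. Both reversed
tails are injective and end in `idx x`, so neither is a proper prefix of the other; the
comparison is decided inside them, and they are equal. -/

namespace List

variable {α : Type*}

theorem Lex.isPrefix_or_forall_append {r : α → α → Prop} {l₁ l₂ : List α}
    (h : Lex r l₁ l₂) : l₁ <+: l₂ ∨ ∀ t, Lex r (l₁ ++ t) (l₂ ++ t) := by
  induction h with
  | nil => exact Or.inl nil_prefix
  | cons _ ih =>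
    rcases ih with hp | happ
    · exact Or.inl ((prefix_cons_inj _).2 hp)
    · exact Or.inr fun t => (happ t).cons
  | rel h => exact Or.inr fun _ => .rel h

theorem IsPrefix.eq_of_getLast?_eq {l₁ l₂ : List α} (h : l₁ <+: l₂) (hne : l₁ ≠ [])
    (hlast : l₁.getLast? = l₂.getLast?) (hnd : l₂.Nodup) : l₁ = l₂ := by
  have hne₂ : l₂ ≠ [] := fun h₂ => hne (prefix_nil.1 (h₂ ▸ h))
  refine Nodup.eq_of_getLast_mem_of_prefix h (hne := hne₂) ?_ hnd
  rw [getLast?_eq_some_getLast hne, getLast?_eq_some_getLast hne₂, Option.some_inj] at hlast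
  exact hlast ▸ getLast_mem hne

theorem eq_of_not_append_lt_of_getLast?_eq [LinearOrder α] {a b t₁ t₂ : List α}
    (hne : a ≠ []) (hlast : a.getLast? = b.getLast?) (ha : a.Nodup) (hb : b.Nodup)
    (h₁ : ¬ b ++ t₁ < a ++ t₁) (h₂ : ¬ a ++ t₂ < b ++ t₂) : a = b := by
  have hne' : b ≠ [] := by rintro rfl; simp_all
  rcases lt_trichotomy a b with hab | hab | hba
  · rcases Lex.isPrefix_or_forall_append hab with hp | happ
    · exact hp.eq_of_getLast?_eq hne hlast hb
    · exact absurd (happ t₂) h₂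
  · exact hab
  · rcases Lex.isPrefix_or_forall_append hba with hp | happ
    · exact (hp.eq_of_getLast?_eq hne' hlast.symm ha).symm
    · exact absurd (happ t₁) h₁

end List

section Paths

variable {V : Type} {E : V → V → Prop} {w : V → V → ℝ} {idx : V → ℕ} {u v x : V}

theorem walkWeight_cons_cons (a b : V) (l : List V) :
    walkWeight w (a :: b :: l) = w a b + walkWeight w (b :: l) := by
  simp [walkWeight]

theorem walkWeight_append_cons (A T : List V) :
    walkWeight w (A ++ x :: T) = walkWeight w (A ++ [x]) + walkWeight w (x :: T) := by
  induction A with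
  | nil => simp [walkWeight]
  | cons a A ih =>
    cases A with
    | nil => simp [walkWeight]
    | cons b A =>
      simp only [List.cons_append, walkWeight_cons_cons] at ih ⊢
      rw [ih, add_assoc]

theorem IsPath.of_append_cons {A T : List V} (h : IsPath E u v (A ++ x :: T)) :
    IsPath E x v (x :: T) := by
  obtain ⟨⟨_, _, hlast, hchain⟩, hnd⟩ := h
  refine ⟨⟨List.cons_ne_nil _ _, rfl, ?_, (List.isChain_append.1 hchain).2.1⟩,
    hnd.of_append_right⟩
  rwa [List.getLast?_append_of_ne_nil _ (List.cons_ne_nil _ _)] at hlast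

theorem pairwise_idx_lt_of_isChain (htopo : ∀ a b, E a b → idx a < idx b) {L : List V}
    (h : L.IsChain E) : L.Pairwise (fun a b => idx a < idx b) :=
  List.pairwise_map.1 ((List.isChain_map idx).2 (h.imp fun a b hab => htopo a b hab)).pairwise

theorem IsPath.append_cons_of_isPath (htopo : ∀ a b, E a b → idx a < idx b) {A T M : List V}
    (h₁ : IsPath E u v (A ++ x :: T)) (h₂ : IsPath E x v (x :: M)) :
    IsPath E u v (A ++ x :: M) := by
  obtain ⟨⟨_, hhead, hlast, hchain⟩, hnd⟩ := h₁
  obtain ⟨⟨_, _, hlast₂, hchain₂⟩, hnd₂⟩ := h₂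
  have hA : ∀ a ∈ A, idx a < idx x := fun a ha =>
    (List.pairwise_append.1 (pairwise_idx_lt_of_isChain htopo hchain)).2.2 a ha x
      List.mem_cons_self
  have hM : ∀ m ∈ M, idx x < idx m :=
    (List.pairwise_cons.1 (pairwise_idx_lt_of_isChain htopo hchain₂)).1
  refine ⟨⟨by simp, ?_, ?_, ?_⟩, ?_⟩
  · cases A <;> simpa using hhead
  · rwa [List.getLast?_append_of_ne_nil _ (List.cons_ne_nil _ _)]
  · have hsplit := List.isChain_append.1 hchain
    exact List.isChain_append.2 ⟨hsplit.1, hchain₂, by simpa using hsplit.2.2⟩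
  · rw [List.nodup_append] at hnd ⊢
    refine ⟨hnd.1, hnd₂, fun a ha b hb hab => ?_⟩
    rcases List.mem_cons.1 hb with rfl | hb
    · exact (hA a ha).ne (congrArg idx hab)
    · exact (hA a ha).not_gt (hab ▸ hM b hb)

theorem IsLexFirstSP.walkWeight_suffix_le (htopo : ∀ a b, E a b → idx a < idx b)
    {A T M : List V} (hL : IsLexFirstSP E w idx u v (A ++ x :: T))
    (hM : IsPath E x v (x :: M)) : walkWeight w (x :: T) ≤ walkWeight w (x :: M) := by
  have := hL.2.1 _ (hL.1.append_cons_of_isPath htopo hM)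
  rw [walkWeight_append_cons A T, walkWeight_append_cons A M] at this
  linarith

theorem IsLexFirstSP.not_lt_suffix (htopo : ∀ a b, E a b → idx a < idx b)
    {A T M : List V} (hL : IsLexFirstSP E w idx u v (A ++ x :: T))
    (hM : IsPath E x v (x :: M)) (hw : walkWeight w (x :: M) = walkWeight w (x :: T)) :
    ¬ (x :: M).reverse.map idx ++ A.reverse.map idx <
      (x :: T).reverse.map idx ++ A.reverse.map idx := by
  have := hL.2.2 _ (hL.1.append_cons_of_isPath htopo hM)
    (by rw [walkWeight_append_cons A T, walkWeight_append_cons A M, hw])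
  simpa only [List.reverse_append, List.map_append, List.lex_lt] using this

theorem IsLexFirstSP.suffix_eq (hinj : Function.Injective idx)
    (htopo : ∀ a b, E a b → idx a < idx b) {u₁ u₂ : V} {A₁ T₁ A₂ T₂ : List V}
    (h₁ : IsLexFirstSP E w idx u₁ v (A₁ ++ x :: T₁))
    (h₂ : IsLexFirstSP E w idx u₂ v (A₂ ++ x :: T₂)) : T₁ = T₂ := by
  have hp₁ := h₁.1.of_append_cons
  have hp₂ := h₂.1.of_append_cons
  have hw : walkWeight w (x :: T₂) = walkWeight w (x :: T₁) :=
    le_antisymm (h₂.walkWeight_suffix_le htopo hp₁) (h₁.walkWeight_suffix_le htopo hp₂)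
  have hnodup : ∀ {T : List V}, IsPath E x v (x :: T) → ((x :: T).reverse.map idx).Nodup :=
    fun hp => (List.nodup_reverse.2 hp.2).map hinj
  have hrev : (x :: T₁).reverse.map idx = (x :: T₂).reverse.map idx :=
    List.eq_of_not_append_lt_of_getLast?_eq (by simp) (by simp) (hnodup hp₁) (hnodup hp₂)
      (h₁.not_lt_suffix htopo hp₂ hw) (h₂.not_lt_suffix htopo hp₁ hw.symm)
  exact List.cons_injective (List.reverse_injective (List.map_injective_iff.2 hinj hrev))

end Paths

theorem stmt11_general (V : Type) (E : V → V → Prop) (w : V → V → ℝ)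
    (idx : V → ℕ) (hinj : Function.Injective idx)
    (htopo : ∀ a b, E a b → idx a < idx b)
    (v : V) (u₁ u₂ : V)
    (L₁ L₂ : List V) (hL₁ : IsLexFirstSP E w idx u₁ v L₁) (hL₂ : IsLexFirstSP E w idx u₂ v L₂)
    (x : V)
    (A₁ : List V) (y₁ : V) (B₁ : List V) (hd₁ : L₁ = A₁ ++ x :: y₁ :: B₁)
    (A₂ : List V) (y₂ : V) (B₂ : List V) (hd₂ : L₂ = A₂ ++ x :: y₂ :: B₂) :
    y₁ = y₂ := by
  subst hd₁ hd₂
  exact List.head_eq_of_cons_eq (IsLexFirstSP.suffix_eq hinj htopo hL₁ hL₂)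

/-- Fix a vertex `v` in a finite DAG with a topological numbering `idx`,
and for ancestors `u` of `v` (vertices `u ≠ v` from which `v` is reachable) consider the
lexicographically-first shortest paths `P(u, v)`. For every vertex `x ≠ v` lying on some
`P(u, v)`, the vertex immediately following `x` is the same in every path `P(u, v)` that
contains `x`; hence the union of these paths is a tree with sink `v` in which every vertex
other than `v` has a unique outgoing edge. -/
theorem stmt11 (V : Type) [Fintype V] (E : V → V → Prop) (w : V → V → ℝ)
    (idx : V → ℕ) (hinj : Function.Injective idx)
    (htopo : ∀ a b, E a b → idx a < idx b)
    (v : V) (u₁ u₂ : V) (hu₁ : u₁ ≠ v) (hu₂ : u₂ ≠ v)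
    (hr₁ : Reaches E u₁ v) (hr₂ : Reaches E u₂ v)
    (L₁ L₂ : List V) (hL₁ : IsLexFirstSP E w idx u₁ v L₁) (hL₂ : IsLexFirstSP E w idx u₂ v L₂)
    (x : V) (hxv : x ≠ v)
    (A₁ : List V) (y₁ : V) (B₁ : List V) (hd₁ : L₁ = A₁ ++ x :: y₁ :: B₁)
    (A₂ : List V) (y₂ : V) (B₂ : List V) (hd₂ : L₂ = A₂ ++ x :: y₂ :: B₂) :
    y₁ = y₂ :=
  stmt11_general V E w idx hinj htopo v u₁ u₂ L₁ L₂ hL₁ hL₂ x A₁ y₁ B₁ hd₁ A₂ y₂ B₂ hd₂
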